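/- Let K and L be pointed sets and let a : Γ × Γ → Γ denote the wedge (coproduct) functor on finite pointed sets. Then the left Kan extension of the contravariant functor (𝐚,𝐛) ↦ Map(𝐚,K) × Map(𝐛,L) along a is naturally isomorphic to the contravariant functor 𝐜 ↦ Map(𝐜, K ∨ L). -/

import Mathlib

/-- Morphisms `𝐧 → 𝐦` in the category `Γ` of finite pointed sets
`𝐧 = {0,…,n}` with basepoint `0`. -/
def GHom (n m : ℕ) := {f : Fin (n + 1) → Fin (m + 1) // f 0 = 0}

/-- Composition in `Γ`. -/
def gcomp {c n m : ℕ} (γ : GHom c n) (δ : GHom n m) : GHom c m :=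
  ⟨fun x => δ.1 (γ.1 x), by show δ.1 (γ.1 0) = 0; rw [γ.2, δ.2]⟩

/-- Based maps `𝐧 → X` into a pointed set `X`, i.e. the value at `𝐧` of the
contravariant functor `X^× : Γᵒᵖ → Set`, `𝐧 ↦ Map(𝐧, X)`. -/
def BMap (n : ℕ) (X : Type) [Inhabited X] := {f : Fin (n + 1) → X // f 0 = default}

/-- Functoriality of `X^×`: precomposition of a based map with a `Γ`-morphism. -/
def pull {X : Type} [Inhabited X] {n m : ℕ} (α : GHom n m) (f : BMap m X) :
    BMap n X :=
  ⟨fun i => f.1 (α.1 i), by show f.1 (α.1 0) = default; rw [α.2, f.2]⟩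

/-- The wedge functor `a : Γ × Γ → Γ` on morphisms, under the identification
`𝐚 ∨ 𝐛 ≅ 𝐚+𝐛` (first block `1,…,a`, second block `a+1,…,a+b`). -/
def wmap {a b a' b' : ℕ} (α : GHom a a') (β : GHom b b') : GHom (a + b) (a' + b') :=
  ⟨fun y =>
    if y.1 = 0 then 0
    else if h2 : y.1 ≤ a then
      ⟨(α.1 ⟨y.1, by omega⟩).1, by have := (α.1 ⟨y.1, by omega⟩).isLt; omega⟩
    else
      (let w := β.1 ⟨y.1 - a, by have := y.isLt; omega⟩
       if w.1 = 0 then 0 else ⟨a' + w.1, by have := w.isLt; omega⟩), by simp⟩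

/-- The relation identifying basepoints in `K ⊕ L`. -/
def WedgeRel (K L : Type) [Inhabited K] [Inhabited L] : K ⊕ L → K ⊕ L → Prop :=
  fun p q => (p = Sum.inl default ∨ p = Sum.inr default) ∧
    (q = Sum.inl default ∨ q = Sum.inr default)

/-- The wedge of pointed sets. -/
def Wedge (K L : Type) [Inhabited K] [Inhabited L] := Quot (WedgeRel K L)

instance (K L : Type) [Inhabited K] [Inhabited L] : Inhabited (Wedge K L) :=
  ⟨Quot.mk _ (Sum.inl default)⟩

/-- The based map `𝐚+𝐛 ≅ 𝐚 ∨ 𝐛 → K ∨ L` induced by based maps `f : 𝐚 → K`,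
`g : 𝐛 → L`. -/
def wval {K L : Type} [Inhabited K] [Inhabited L] {a b : ℕ}
    (f : BMap a K) (g : BMap b L) (y : Fin (a + b + 1)) : Wedge K L :=
  if y.1 = 0 then Quot.mk _ (Sum.inl default)
  else if h2 : y.1 ≤ a then Quot.mk _ (Sum.inl (f.1 ⟨y.1, by omega⟩))
  else Quot.mk _ (Sum.inr (g.1 ⟨y.1 - a, by have := y.isLt; omega⟩))

/-- The canonical cocone: for `γ : 𝐜 → 𝐚+𝐛` in `Γ` and based maps `f : 𝐚 → K`,
`g : 𝐛 → L`, the based map `𝐜 → K ∨ L` obtained by composing `γ` with the wedge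
of `f` and `g`. -/
def uw (K L : Type) [Inhabited K] [Inhabited L] (c a b : ℕ)
    (γ : GHom c (a + b)) (p : BMap a K × BMap b L) : BMap c (Wedge K L) :=
  ⟨fun x => wval p.1 p.2 (γ.1 x), by simp [γ.2, wval]; rfl⟩


/-!
Every based map `h : 𝐜 → K ∨ L` is the image under `uw` of a normal form: the map
`splitBy (IsRight ∘ h) : 𝐜 → 𝐜 ∨ 𝐜`, which sends each point to the copy of `𝐜` on the side where
`h` lands, together with the two components of `h`. This gives uniqueness. For existence, a cocone
takes the same value on any `(γ : 𝐜 → 𝐚 ∨ 𝐛, f, g)` and on the normal form of `uw γ (f, g)`,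
by two cocone relations: one along `γ ≫ fst ∨ γ ≫ snd : 𝐜 ∨ 𝐜 → 𝐚 ∨ 𝐛`, which recovers `γ` from a
splitting of `𝐜` and turns `(f, g)` into the components of `uw γ (f, g)`, and one along the
endomorphism of `𝐜` collapsing the points sent to the basepoint, after which the side chosen for
those points no longer matters.
-/

namespace Wedge

variable {K L : Type} [Inhabited K] [Inhabited L]

def inl (k : K) : Wedge K L := Quot.mk _ (Sum.inl k)

def inr (l : L) : Wedge K L := Quot.mk _ (Sum.inr l)

lemma inr_default : (inr default : Wedge K L) = default :=
  Quot.sound ⟨Or.inr rfl, Or.inl rfl⟩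

@[elab_as_elim]
lemma ind {P : Wedge K L → Prop} (inl : ∀ k, P (inl k)) (inr : ∀ l, P (inr l))
    (p : Wedge K L) : P p :=
  Quot.ind (Sum.rec inl inr) p

def lift {X : Sort*} (φ : K → X) (ψ : L → X) (h : φ default = ψ default) :
    Wedge K L → X :=
  Quot.lift (Sum.elim φ ψ) (by rintro p q ⟨rfl | rfl, rfl | rfl⟩ <;> simp only [Sum.elim_inl,
    Sum.elim_inr, h])

@[simp]
lemma lift_inl {X : Sort*} (φ : K → X) (ψ : L → X) (h : φ default = ψ default) (k : K) :
    lift φ ψ h (inl k) = φ k :=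
  rfl

@[simp]
lemma lift_inr {X : Sort*} (φ : K → X) (ψ : L → X) (h : φ default = ψ default) (l : L) :
    lift φ ψ h (inr l) = ψ l :=
  rfl

def fst : Wedge K L → K := lift id (fun _ => default) (by rfl)

def snd : Wedge K L → L := lift (fun _ => default) id (by rfl)

lemma fst_default : fst (default : Wedge K L) = default :=
  rfl

lemma snd_default : snd (default : Wedge K L) = default :=
  rfl

def IsRight : Wedge K L → Prop := lift (fun _ => False) (· ≠ default) (by simp)

lemma inl_fst {p : Wedge K L} (hp : ¬ p.IsRight) : inl p.fst = p := by
  induction p using Wedge.ind with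
  | inl k => rfl
  | inr l =>
    obtain rfl : l = default := by simpa [IsRight] using hp
    exact inr_default.symm

lemma inr_snd {p : Wedge K L} (hp : p.IsRight) : inr p.snd = p := by
  induction p using Wedge.ind with
  | inl k => exact hp.elim
  | inr l => rfl

end Wedge

namespace BMap

variable {X Y : Type} [Inhabited X] [Inhabited Y] {n : ℕ}

def map (φ : X → Y) (hφ : φ default = default) (f : BMap n X) : BMap n Y :=
  ⟨fun i => φ (f.1 i), by simp only [f.2, hφ]⟩

@[simp]
lemma map_val (φ : X → Y) (hφ : φ default = default) (f : BMap n X) (i : Fin (n + 1)) :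
    (f.map φ hφ).1 i = φ (f.1 i) :=
  rfl

def unwedge {K L : Type} [Inhabited K] [Inhabited L] (h : BMap n (Wedge K L)) :
    BMap n K × BMap n L :=
  (h.map Wedge.fst Wedge.fst_default, h.map Wedge.snd Wedge.snd_default)

end BMap

@[simp]
lemma pull_val {X : Type} [Inhabited X] {n m : ℕ} (α : GHom n m) (f : BMap m X)
    (i : Fin (n + 1)) : (pull α f).1 i = f.1 (α.1 i) :=
  rfl

@[simp]
lemma gcomp_val {c n m : ℕ} (γ : GHom c n) (δ : GHom n m) (x : Fin (c + 1)) :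
    (gcomp γ δ).1 x = δ.1 (γ.1 x) :=
  rfl

section Gamma

variable {a b : ℕ}

def wedgeInl (a b : ℕ) : GHom a (a + b) :=
  ⟨fun z => ⟨z.1, by omega⟩, Fin.ext (by simp)⟩

def wedgeInr (a b : ℕ) : GHom b (a + b) :=
  ⟨fun w => if w.1 = 0 then 0 else ⟨a + w.1, by omega⟩, by simp⟩

def wedgeFst (a b : ℕ) : GHom (a + b) a :=
  ⟨fun y => if h : y.1 ≤ a then ⟨y.1, by omega⟩ else 0, by simp⟩

def wedgeSnd (a b : ℕ) : GHom (a + b) b :=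
  ⟨fun y => if h : a < y.1 then ⟨y.1 - a, by omega⟩ else 0, by simp⟩

lemma eq_wedgeInl_of_le {y : Fin (a + b + 1)} (hy : y.1 ≤ a) :
    y = (wedgeInl a b).1 ⟨y.1, by omega⟩ :=
  rfl

lemma eq_wedgeInr_of_lt {y : Fin (a + b + 1)} (hy : a < y.1) :
    y = (wedgeInr a b).1 ⟨y.1 - a, by omega⟩ := by
  ext
  simp [wedgeInr, show y.1 - a ≠ 0 by omega]
  omega

lemma wedgeInl_or_wedgeInr (y : Fin (a + b + 1)) :
    (∃ z, y = (wedgeInl a b).1 z) ∨ ∃ w, y = (wedgeInr a b).1 w := by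
  rcases le_or_gt y.1 a with hy | hy
  exacts [Or.inl ⟨_, eq_wedgeInl_of_le hy⟩, Or.inr ⟨_, eq_wedgeInr_of_lt hy⟩]

@[simp]
lemma wedgeFst_wedgeInl (z : Fin (a + 1)) : (wedgeFst a b).1 ((wedgeInl a b).1 z) = z := by
  simp [wedgeFst, wedgeInl, z.is_le]

@[simp]
lemma wedgeFst_wedgeInr (w : Fin (b + 1)) : (wedgeFst a b).1 ((wedgeInr a b).1 w) = 0 := by
  rcases eq_or_ne w 0 with rfl | hw
  · rw [(wedgeInr a b).2, (wedgeFst a b).2]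
  · simp [wedgeFst, wedgeInr, hw]

@[simp]
lemma wedgeSnd_wedgeInl (z : Fin (a + 1)) : (wedgeSnd a b).1 ((wedgeInl a b).1 z) = 0 := by
  simp [wedgeSnd, wedgeInl, z.is_le]

@[simp]
lemma wedgeSnd_wedgeInr (w : Fin (b + 1)) : (wedgeSnd a b).1 ((wedgeInr a b).1 w) = w := by
  rcases eq_or_ne w 0 with rfl | hw
  · rw [(wedgeInr a b).2, (wedgeSnd a b).2]
  · simp [wedgeSnd, wedgeInr, hw]

@[simp]
lemma wmap_wedgeInl {a' b' : ℕ} (α : GHom a a') (β : GHom b b') (z : Fin (a + 1)) :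
    (wmap α β).1 ((wedgeInl a b).1 z) = (wedgeInl a' b').1 (α.1 z) := by
  rcases eq_or_ne z 0 with rfl | hz
  · rw [(wedgeInl a b).2, (wmap α β).2, α.2, (wedgeInl a' b').2]
  · simp [wmap, wedgeInl, Fin.val_ne_zero_iff.mpr hz, z.is_le]

@[simp]
lemma wmap_wedgeInr {a' b' : ℕ} (α : GHom a a') (β : GHom b b') (w : Fin (b + 1)) :
    (wmap α β).1 ((wedgeInr a b).1 w) = (wedgeInr a' b').1 (β.1 w) := by
  rcases eq_or_ne w 0 with rfl | hw
  · rw [(wedgeInr a b).2, (wmap α β).2, β.2, (wedgeInr a' b').2]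
  · simp [wmap, wedgeInr, hw]

end Gamma

section WedgeMaps

variable {K L : Type} [Inhabited K] [Inhabited L] {a b : ℕ} (f : BMap a K) (g : BMap b L)

@[simp]
lemma wval_wedgeInl (z : Fin (a + 1)) :
    wval f g ((wedgeInl a b).1 z) = Wedge.inl (f.1 z) := by
  rcases eq_or_ne z 0 with rfl | hz
  · simp only [(wedgeInl a b).2, wval, f.2]
    rfl
  · simp only [wval, wedgeInl, Fin.val_eq_zero_iff, hz, ↓reduceIte, Fin.is_le, ↓reduceDIte,
      Fin.eta]
    rfl

@[simp]
lemma wval_wedgeInr (w : Fin (b + 1)) :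
    wval f g ((wedgeInr a b).1 w) = Wedge.inr (g.1 w) := by
  rcases eq_or_ne w 0 with rfl | hw
  · simp only [(wedgeInr a b).2, wval, g.2, Wedge.inr_default]
    rfl
  · simp only [wval, wedgeInr, Fin.val_eq_zero_iff, hw, ↓reduceIte, Nat.add_eq_zero_iff,
      and_false, add_le_iff_nonpos_right, nonpos_iff_eq_zero, ↓reduceDIte, add_tsub_cancel_left,
      Fin.eta]
    rfl

lemma wval_pull {a' b' : ℕ} (α : GHom a a') (β : GHom b b') (f : BMap a' K) (g : BMap b' L)
    (y : Fin (a + b + 1)) : wval (pull α f) (pull β g) y = wval f g ((wmap α β).1 y) := by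
  rcases wedgeInl_or_wedgeInr y with ⟨z, rfl⟩ | ⟨w, rfl⟩ <;>
    simp only [wval_wedgeInl, wval_wedgeInr, wmap_wedgeInl, wmap_wedgeInr, pull_val]

lemma fst_wval (y : Fin (a + b + 1)) : (wval f g y).fst = f.1 ((wedgeFst a b).1 y) := by
  rcases wedgeInl_or_wedgeInr y with ⟨z, rfl⟩ | ⟨w, rfl⟩ <;> simp [Wedge.fst, f.2]

lemma snd_wval (y : Fin (a + b + 1)) : (wval f g y).snd = g.1 ((wedgeSnd a b).1 y) := by
  rcases wedgeInl_or_wedgeInr y with ⟨z, rfl⟩ | ⟨w, rfl⟩ <;> simp [Wedge.snd, g.2]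

lemma isRight_wval_iff {y : Fin (a + b + 1)} (hy : wval f g y ≠ default) :
    (wval f g y).IsRight ↔ a < y.1 := by
  rcases le_or_gt y.1 a with hle | hlt
  · rw [iff_false_intro hle.not_gt, eq_wedgeInl_of_le hle, wval_wedgeInl]
    exact Iff.rfl
  · rw [eq_wedgeInr_of_lt hlt, wval_wedgeInr] at hy
    rw [iff_true_intro hlt, iff_true, eq_wedgeInr_of_lt hlt, wval_wedgeInr]
    exact fun h => hy (by rw [h, Wedge.inr_default])

end WedgeMaps

def IsWedgeCocone {K L : Type} [Inhabited K] [Inhabited L] {c : ℕ} {Z : Sort*}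
    (v : ∀ a b : ℕ, GHom c (a + b) → BMap a K × BMap b L → Z) : Prop :=
  ∀ (a b a' b' : ℕ) (α : GHom a a') (β : GHom b b') (γ : GHom c (a + b))
    (f : BMap a' K) (g : BMap b' L),
    v a b γ (pull α f, pull β g) = v a' b' (gcomp γ (wmap α β)) (f, g)

lemma uw_isWedgeCocone (K L : Type) [Inhabited K] [Inhabited L] (c : ℕ) :
    IsWedgeCocone (uw K L c) := by
  intro a b a' b' α β γ f g
  exact Subtype.ext (funext fun x => wval_pull α β f g (γ.1 x))

section NormalForm

variable {K L : Type} [Inhabited K] [Inhabited L] {c : ℕ}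

open scoped Classical in
noncomputable def splitBy (r : Fin (c + 1) → Prop) : GHom c (c + c) :=
  ⟨fun x => if r x then (wedgeInr c c).1 x else (wedgeInl c c).1 x, by
    dsimp only
    split_ifs
    exacts [(wedgeInr c c).2, (wedgeInl c c).2]⟩

lemma splitBy_of_pos (r : Fin (c + 1) → Prop) {x : Fin (c + 1)} (hx : r x) :
    (splitBy r).1 x = (wedgeInr c c).1 x :=
  if_pos hx

lemma splitBy_of_neg (r : Fin (c + 1) → Prop) {x : Fin (c + 1)} (hx : ¬ r x) :
    (splitBy r).1 x = (wedgeInl c c).1 x :=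
  if_neg hx

open scoped Classical in
noncomputable def baseCollapse {X : Type} [Inhabited X] (h : BMap c X) : GHom c c :=
  ⟨fun x => if h.1 x = default then 0 else x, by dsimp only; split_ifs <;> rfl⟩

variable {X : Type} [Inhabited X] (h : BMap c X) {x : Fin (c + 1)}

lemma baseCollapse_of_eq (hx : h.1 x = default) : (baseCollapse h).1 x = 0 :=
  if_pos hx

lemma baseCollapse_of_ne (hx : h.1 x ≠ default) : (baseCollapse h).1 x = x :=
  if_neg hx

lemma pull_baseCollapse_map {Y : Type} [Inhabited Y] (φ : X → Y) (hφ : φ default = default) :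
    pull (baseCollapse h) (h.map φ hφ) = h.map φ hφ := by
  refine Subtype.ext (funext fun x => ?_)
  by_cases hx : h.1 x = default
  · simp [baseCollapse_of_eq h hx, hx, h.2]
  · simp [baseCollapse_of_ne h hx]

open scoped Classical in
lemma wmap_baseCollapse_splitBy (r : Fin (c + 1) → Prop) (x : Fin (c + 1)) :
    (wmap (baseCollapse h) (baseCollapse h)).1 ((splitBy r).1 x) =
      if h.1 x = default then 0 else (splitBy r).1 x := by
  by_cases hx : h.1 x = default <;> by_cases hr : r x <;>
    simp [splitBy_of_pos, splitBy_of_neg, baseCollapse_of_eq, baseCollapse_of_ne, hx, hr,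
      (wedgeInl c c).2, (wedgeInr c c).2]

lemma gcomp_splitBy_wmap_baseCollapse_congr {r r' : Fin (c + 1) → Prop}
    (hrr' : ∀ x, h.1 x ≠ default → (r x ↔ r' x)) :
    gcomp (splitBy r) (wmap (baseCollapse h) (baseCollapse h)) =
      gcomp (splitBy r') (wmap (baseCollapse h) (baseCollapse h)) := by
  refine Subtype.ext (funext fun x => ?_)
  simp only [gcomp_val, wmap_baseCollapse_splitBy]
  split_ifs with hx
  · rfl
  · by_cases hr : r x
    · rw [splitBy_of_pos r hr, splitBy_of_pos r' ((hrr' x hx).1 hr)]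
    · rw [splitBy_of_neg r hr, splitBy_of_neg r' (mt (hrr' x hx).2 hr)]

lemma gcomp_splitBy_wmap_wedgeFst_wedgeSnd {a b : ℕ} (γ : GHom c (a + b)) :
    gcomp (splitBy fun x => a < (γ.1 x).1)
      (wmap (gcomp γ (wedgeFst a b)) (gcomp γ (wedgeSnd a b))) = γ := by
  refine Subtype.ext (funext fun x => ?_)
  rcases le_or_gt (γ.1 x).1 a with hle | hlt
  · rw [gcomp_val, splitBy_of_neg _ hle.not_gt, wmap_wedgeInl, gcomp_val, eq_wedgeInl_of_le hle,
      wedgeFst_wedgeInl]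
  · rw [gcomp_val, splitBy_of_pos _ hlt, wmap_wedgeInr, gcomp_val, eq_wedgeInr_of_lt hlt,
      wedgeSnd_wedgeInr]

lemma uw_splitBy_isRight (h : BMap c (Wedge K L)) :
    uw K L c c c (splitBy fun x => (h.1 x).IsRight) h.unwedge =
      h := by
  refine Subtype.ext (funext fun x => ?_)
  by_cases hx : (h.1 x).IsRight
  · simp [uw, BMap.unwedge, splitBy_of_pos (fun x => (h.1 x).IsRight) hx, Wedge.inr_snd hx]
  · simp [uw, BMap.unwedge, splitBy_of_neg (fun x => (h.1 x).IsRight) hx, Wedge.inl_fst hx]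

end NormalForm

section Cocone

variable {K L : Type} [Inhabited K] [Inhabited L] {c a b : ℕ}

lemma pull_wedgeFst_pull_wedgeSnd_eq_unwedge (γ : GHom c (a + b)) (f : BMap a K) (g : BMap b L) :
    (pull (gcomp γ (wedgeFst a b)) f, pull (gcomp γ (wedgeSnd a b)) g) =
      (uw K L c a b γ (f, g)).unwedge :=
  Prod.ext (Subtype.ext (funext fun x => (fst_wval f g (γ.1 x)).symm))
    (Subtype.ext (funext fun x => (snd_wval f g (γ.1 x)).symm))

variable {Z : Sort*} {v : ∀ a b : ℕ, GHom c (a + b) → BMap a K × BMap b L → Z}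

lemma IsWedgeCocone.splitBy_congr (hv : IsWedgeCocone v) (h : BMap c (Wedge K L))
    {r r' : Fin (c + 1) → Prop} (hrr' : ∀ x, h.1 x ≠ default → (r x ↔ r' x)) :
    v c c (splitBy r) h.unwedge =
      v c c (splitBy r') h.unwedge := by
  have collapse : ∀ r, v c c (splitBy r) h.unwedge =
      v c c (gcomp (splitBy r) (wmap (baseCollapse h) (baseCollapse h))) h.unwedge := by
    intro r
    rw [BMap.unwedge, ← hv, pull_baseCollapse_map, pull_baseCollapse_map]
  rw [collapse, collapse, gcomp_splitBy_wmap_baseCollapse_congr h hrr']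

lemma IsWedgeCocone.eq_splitBy_isRight (hv : IsWedgeCocone v) (γ : GHom c (a + b))
    (p : BMap a K × BMap b L) :
    v a b γ p = v c c (splitBy fun x => ((uw K L c a b γ p).1 x).IsRight)
      (uw K L c a b γ p).unwedge := by
  obtain ⟨f, g⟩ := p
  calc v a b γ (f, g)
      = v a b (gcomp (splitBy fun x => a < (γ.1 x).1)
          (wmap (gcomp γ (wedgeFst a b)) (gcomp γ (wedgeSnd a b)))) (f, g) := by
        rw [gcomp_splitBy_wmap_wedgeFst_wedgeSnd]
    _ = v c c (splitBy fun x => a < (γ.1 x).1)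
          (pull (gcomp γ (wedgeFst a b)) f, pull (gcomp γ (wedgeSnd a b)) g) := (hv ..).symm
    _ = _ := by
      rw [pull_wedgeFst_pull_wedgeSnd_eq_unwedge]
      exact hv.splitBy_congr _ fun x hx => (isRight_wval_iff f g hx).symm

end Cocone

/-- The paper's Lemma `a_*(K^× × L^×) = (K ∨ L)^×`, in pointwise form: the left
Kan extension along the wedge functor `a : Γ × Γ → Γ` (as a Kan extension of
contravariant `Set`-valued functors, computed at `𝐜` as the colimit over the comma
category `(𝐜 ↓ a)`) of `(𝐚,𝐛) ↦ Map(𝐚,K) × Map(𝐛,L)` is naturally isomorphic to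
`𝐜 ↦ Map(𝐜, K ∨ L)`: the canonical family `uw` is a cocone on the comma category,
and it is universal among such cocones. -/
theorem lan_wedge (K L : Type) [Inhabited K] [Inhabited L] (c : ℕ) :
    (∀ (a b a' b' : ℕ) (α : GHom a a') (β : GHom b b') (γ : GHom c (a + b))
        (f : BMap a' K) (g : BMap b' L),
        uw K L c a b γ (pull α f, pull β g) =
          uw K L c a' b' (gcomp γ (wmap α β)) (f, g)) ∧
    (∀ (Z : Type) (v : ∀ a b : ℕ, GHom c (a + b) → BMap a K × BMap b L → Z),
      (∀ (a b a' b' : ℕ) (α : GHom a a') (β : GHom b b') (γ : GHom c (a + b))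
          (f : BMap a' K) (g : BMap b' L),
          v a b γ (pull α f, pull β g) = v a' b' (gcomp γ (wmap α β)) (f, g)) →
      ∃! w : BMap c (Wedge K L) → Z,
        ∀ (a b : ℕ) (γ : GHom c (a + b)) (p : BMap a K × BMap b L),
          v a b γ p = w (uw K L c a b γ p)) := by
  refine ⟨uw_isWedgeCocone K L c, fun Z v (hv : IsWedgeCocone v) => ?_⟩
  refine ⟨fun h => v c c (splitBy fun x => (h.1 x).IsRight) h.unwedge,
    fun _ _ => hv.eq_splitBy_isRight, fun w hw => funext fun h => ?_⟩
  have := hw c c (splitBy fun x => (h.1 x).IsRight) h.unwedge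
  rwa [uw_splitBy_isRight, eq_comm] at this
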